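/- arXiv:0711.1143 — 2 statements merged into one kernel-verified Lean document; each statement's English description precedes it below -/
import Mathlib

section
/- For each Z ∈ L^∞ and initial wealth w ∈ ℝ there exists a unique real number H(Z) with U(w + H(Z) − Z) = U(w); indeed the map x ↦ U(w + x − Z) is concave, continuous and strictly increasing on ℝ, is < U(w) for x small enough and > U(w) for x large enough. -/
/-!
Allocations of a risk `V` are closed under sums and scalar multiples, so concavity of the `u_t`
makes `U` concave in `V`, and moving `V₂ - V₁ ≥ 0` into the last period makes it monotone.
Hence `g x = U(w - Z + x)` is concave, thus continuous, and it is strictly increasing as soon as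
`U(V) < U(V + c)` for some `c > 0` at every bounded `V`. For that, the allocation `Ỹ_t ≡ x`
gives `U(V + T x + ‖V‖_∞) ≥ ∑_t u_t(x)`, which tends to `∑_t sup u_t`; on the other hand every
allocation of `V` has some `Ỹ_t ≤ ‖V‖_∞`, so `U(V) ≤ ∑_t sup u_t - min_t (sup u_t - u_t(‖V‖_∞))`
(and if some `u_t` is unbounded above, so is `∑_t u_t(x)`). Comparing `w - Z` with the
constants `w ± ‖Z‖_∞` and the intermediate value theorem then give the unique price.
-/

open MeasureTheory Finset Real

noncomputable section

/-- `A(W)`: the set of admissible intertemporal allocations of the risk `W`: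
adapted processes `(Y_t)_{t∈𝕋}` with each `Y_t` essentially bounded and
`∑_{t∈𝕋} Y_t/B_t = W` a.s. -/
def IsAlloc {Ω : Type*} [mΩ : MeasurableSpace Ω] (μ : Measure Ω) (T : ℕ)
    (ℱ : ℕ → MeasurableSpace Ω) (B : ℕ → Ω → ℝ) (W : Ω → ℝ) (Y : ℕ → Ω → ℝ) : Prop :=
  (∀ t ∈ Finset.Icc 1 T, Measurable[ℱ t] (Y t) ∧ ∃ C : ℝ, ∀ᵐ ω ∂μ, |Y t ω| ≤ C) ∧
  ∀ᵐ ω ∂μ, ∑ t ∈ Finset.Icc 1 T, Y t ω / B t ω = W ω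

/-- The integrated expected utility `∑_{t∈𝕋} E[u_t(Ỹ_t)]` of an allocation. -/
def allocVal {Ω : Type*} [mΩ : MeasurableSpace Ω] (μ : Measure Ω) (T : ℕ)
    (u : ℕ → ℝ → ℝ) (B : ℕ → Ω → ℝ) (Y : ℕ → Ω → ℝ) : ℝ :=
  ∑ t ∈ Finset.Icc 1 T, ∫ ω, u t (Y t ω / B t ω) ∂μ

/-- The utility functional `U(W) = sup { ∑_t E[u_t(Ỹ_t)] : Y ∈ A(W) }`. -/
def Util {Ω : Type*} [mΩ : MeasurableSpace Ω] (μ : Measure Ω) (T : ℕ)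
    (ℱ : ℕ → MeasurableSpace Ω) (u : ℕ → ℝ → ℝ) (B : ℕ → Ω → ℝ) (W : Ω → ℝ) : ℝ :=
  sSup {s : ℝ | ∃ Y, IsAlloc μ T ℱ B W Y ∧ s = allocVal μ T u B Y}

section IndifferencePrice

open Filter Topology

variable {Ω : Type*}

def EssBddMeasurable (m : MeasurableSpace Ω) [MeasurableSpace Ω] (μ : Measure Ω) (V : Ω → ℝ) :
    Prop :=
  Measurable[m] V ∧ ∃ C, ∀ᵐ ω ∂μ, |V ω| ≤ C

namespace EssBddMeasurable

variable {m : MeasurableSpace Ω} [MeasurableSpace Ω] {μ : Measure Ω} {V V₁ V₂ : Ω → ℝ}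

theorem const (c : ℝ) : EssBddMeasurable m μ fun _ => c :=
  ⟨measurable_const, |c|, .of_forall fun _ => le_rfl⟩

theorem add (h₁ : EssBddMeasurable m μ V₁) (h₂ : EssBddMeasurable m μ V₂) :
    EssBddMeasurable m μ (V₁ + V₂) := by
  obtain ⟨C₁, hC₁⟩ := h₁.2
  obtain ⟨C₂, hC₂⟩ := h₂.2
  refine ⟨h₁.1.add h₂.1, C₁ + C₂, ?_⟩
  filter_upwards [hC₁, hC₂] with ω h₁ω h₂ω
  exact (abs_add_le _ _).trans (add_le_add h₁ω h₂ω)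

theorem add_const (h : EssBddMeasurable m μ V) (c : ℝ) :
    EssBddMeasurable m μ fun ω => V ω + c :=
  h.add (const c)

theorem const_smul (a : ℝ) (h : EssBddMeasurable m μ V) : EssBddMeasurable m μ (a • V) := by
  obtain ⟨C, hC⟩ := h.2
  refine ⟨h.1.const_smul a, |a| * C, ?_⟩
  filter_upwards [hC] with ω hω
  simpa only [Pi.smul_apply, smul_eq_mul, abs_mul] using
    mul_le_mul_of_nonneg_left hω (abs_nonneg a)

theorem sub (h₁ : EssBddMeasurable m μ V₁) (h₂ : EssBddMeasurable m μ V₂) :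
    EssBddMeasurable m μ (V₁ - V₂) := by
  simpa [sub_eq_add_neg] using h₁.add (h₂.const_smul (-1))

end EssBddMeasurable

structure IsDiscount (T : ℕ) (ℱ : ℕ → MeasurableSpace Ω) (B : ℕ → Ω → ℝ) : Prop where
  measurable : ∀ t ∈ Icc 1 T, Measurable[ℱ t] (B t)
  one_le : ∀ t ∈ Icc 1 T, ∀ ω, 1 ≤ B t ω
  bddAbove : ∀ t ∈ Icc 1 T, ∃ D, ∀ ω, B t ω ≤ D

theorem isDiscount_of_rate {T : ℕ} {ℱ : ℕ → MeasurableSpace Ω} (hℱ : Monotone ℱ)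
    {r : ℕ → Ω → ℝ} (hr_meas : ∀ t ∈ Icc 1 T, Measurable[ℱ (t - 1)] (r t))
    (hr_nonneg : ∀ t ∈ Icc 1 T, ∀ ω, 0 ≤ r t ω) (hr_bdd : ∀ t ∈ Icc 1 T, ∃ C, ∀ ω, r t ω ≤ C)
    {B : ℕ → Ω → ℝ} (hB : ∀ t ω, B t ω = ∏ k ∈ Icc 1 t, (1 + r k ω)) :
    IsDiscount T ℱ B := by
  have hsub : ∀ t ∈ Icc 1 T, Icc 1 t ⊆ Icc 1 T := fun t ht =>
    Icc_subset_Icc le_rfl (mem_Icc.mp ht).2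
  have hfactor : ∀ k ∈ Icc 1 T, ∀ ω, 1 ≤ 1 + r k ω := fun k hk ω => by
    linarith [hr_nonneg k hk ω]
  refine ⟨fun t ht => ?_, fun t ht ω => ?_, fun t ht => ?_⟩
  · rw [show B t = fun ω => ∏ k ∈ Icc 1 t, (1 + r k ω) from funext (hB t)]
    refine Finset.measurable_prod _ fun k hk => measurable_const.add ?_
    exact (hr_meas k (hsub t ht hk)).mono (hℱ ((Nat.sub_le k 1).trans (mem_Icc.mp hk).2)) le_rfl
  · rw [hB]
    exact one_le_prod fun k hk => hfactor k (hsub t ht hk) ω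
  · have hC : ∀ k, ∃ C, k ∈ Icc 1 T → ∀ ω, r k ω ≤ C := fun k => by
      by_cases hk : k ∈ Icc 1 T
      · exact (hr_bdd k hk).imp fun _ h _ => h
      · exact ⟨0, fun h => absurd h hk⟩
    choose C hC using hC
    refine ⟨∏ k ∈ Icc 1 t, (1 + C k), fun ω => ?_⟩
    rw [hB]
    exact prod_le_prod (fun k hk => zero_le_one.trans (hfactor k (hsub t ht hk) ω))
      fun k hk => by linarith [hC k (hsub t ht hk) ω]

section Allocation

variable [mΩ : MeasurableSpace Ω] {μ : Measure Ω} {T : ℕ} {ℱ : ℕ → MeasurableSpace Ω}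
  {B : ℕ → Ω → ℝ} {V V₁ V₂ : Ω → ℝ} {Y Y₁ Y₂ : ℕ → Ω → ℝ}

theorem IsAlloc.add (h₁ : IsAlloc μ T ℱ B V₁ Y₁) (h₂ : IsAlloc μ T ℱ B V₂ Y₂) :
    IsAlloc μ T ℱ B (V₁ + V₂) (Y₁ + Y₂) := by
  refine ⟨fun t ht => ⟨(h₁.1 t ht).1.add (h₂.1 t ht).1, ?_⟩, ?_⟩
  · obtain ⟨C₁, hC₁⟩ := (h₁.1 t ht).2
    obtain ⟨C₂, hC₂⟩ := (h₂.1 t ht).2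
    refine ⟨C₁ + C₂, ?_⟩
    filter_upwards [hC₁, hC₂] with ω h₁ω h₂ω
    exact (abs_add_le _ _).trans (add_le_add h₁ω h₂ω)
  · filter_upwards [h₁.2, h₂.2] with ω e₁ e₂
    simp only [Pi.add_apply, add_div, sum_add_distrib, e₁, e₂]

theorem IsAlloc.const_smul (a : ℝ) (h : IsAlloc μ T ℱ B V Y) :
    IsAlloc μ T ℱ B (a • V) (a • Y) := by
  refine ⟨fun t ht => ⟨(h.1 t ht).1.const_smul a, ?_⟩, ?_⟩
  · obtain ⟨C, hC⟩ := (h.1 t ht).2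
    refine ⟨|a| * C, ?_⟩
    filter_upwards [hC] with ω hω
    simpa only [Pi.smul_apply, smul_eq_mul, abs_mul] using
      mul_le_mul_of_nonneg_left hω (abs_nonneg a)
  · filter_upwards [h.2] with ω e
    simp only [Pi.smul_apply, smul_eq_mul, mul_div_assoc, ← mul_sum, e]

theorem isAlloc_single (hB : IsDiscount T ℱ B) (hT : 1 ≤ T) {D : Ω → ℝ}
    (hD : EssBddMeasurable (ℱ T) μ D) : IsAlloc μ T ℱ B D (Pi.single T (B T * D)) := by
  have hTT : T ∈ Icc 1 T := mem_Icc.mpr ⟨hT, le_rfl⟩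
  refine ⟨fun t ht => ?_, .of_forall fun ω => ?_⟩
  · rcases eq_or_ne t T with rfl | hne
    · obtain ⟨C, hC⟩ := hD.2
      obtain ⟨D₀, hD₀⟩ := hB.bddAbove t ht
      refine ⟨by simpa using (hB.measurable t ht).mul hD.1, D₀ * C, ?_⟩
      filter_upwards [hC] with ω hω
      have hB₁ := hB.one_le t ht ω
      simp only [Pi.single_eq_same, Pi.mul_apply, abs_mul, abs_of_pos (by linarith : 0 < B t ω)]
      exact mul_le_mul (hD₀ ω) hω (abs_nonneg _) (by linarith [hD₀ ω])
    · simp only [Pi.single_eq_of_ne hne]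
      exact ⟨measurable_const, 0, .of_forall fun ω => by simp⟩
  · rw [sum_eq_single_of_mem T hTT fun t _ hne => by simp [Pi.single_eq_of_ne hne]]
    have hB₁ := hB.one_le T hTT ω
    simp only [Pi.single_eq_same, Pi.mul_apply]
    field_simp

theorem isAlloc_const (hB : IsDiscount T ℱ B) (c : ℝ) :
    IsAlloc μ T ℱ B (fun _ => T * c) (fun t ω => c * B t ω) := by
  refine ⟨fun t ht => ⟨(hB.measurable t ht).const_mul c, ?_⟩, .of_forall fun ω => ?_⟩
  · obtain ⟨D₀, hD₀⟩ := hB.bddAbove t ht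
    refine ⟨|c| * D₀, .of_forall fun ω => ?_⟩
    have hB₁ := hB.one_le t ht ω
    rw [abs_mul, abs_of_pos (by linarith : 0 < B t ω)]
    exact mul_le_mul_of_nonneg_left (hD₀ ω) (abs_nonneg c)
  · rw [sum_congr rfl fun t ht => mul_div_cancel_right₀ c (by linarith [hB.one_le t ht ω]),
      sum_const, Nat.card_Icc, nsmul_eq_mul, Nat.add_sub_cancel]

theorem IsAlloc.integrable_comp [IsFiniteMeasure μ] (hℱ : ∀ t, ℱ t ≤ mΩ)
    (hB : IsDiscount T ℱ B) (hY : IsAlloc μ T ℱ B V Y) {t : ℕ} (ht : t ∈ Icc 1 T) {f : ℝ → ℝ}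
    (hf : Continuous f) : Integrable (fun ω => f (Y t ω / B t ω)) μ := by
  obtain ⟨C, hC⟩ := (hY.1 t ht).2
  obtain ⟨M, hM⟩ := (isCompact_Icc (a := -C) (b := C)).exists_bound_of_continuousOn
    hf.continuousOn
  have hmeas : Measurable fun ω => Y t ω / B t ω :=
    ((hY.1 t ht).1.mono (hℱ t) le_rfl).div ((hB.measurable t ht).mono (hℱ t) le_rfl)
  refine .of_bound (hf.measurable.comp hmeas).aestronglyMeasurable M ?_
  filter_upwards [hC] with ω hω
  refine hM _ (abs_le.mp ?_)
  rw [abs_div, abs_of_pos (a := B t ω) (by linarith [hB.one_le t ht ω])]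
  exact (div_le_self (abs_nonneg _) (hB.one_le t ht ω)).trans hω

end Allocation

theorem ConcaveOn.strictMono_of_forall_exists_lt {g : ℝ → ℝ} (hg : ConcaveOn ℝ Set.univ g)
    (h : ∀ x, ∃ y, x < y ∧ g x < g y) : StrictMono g := fun a b hab => by
  obtain ⟨c, hbc, hgbc⟩ := h b
  exact hg.strictMonoOn (Set.mem_univ c) hbc hgbc ⟨Set.mem_univ a, Set.mem_Iic.mpr hab.le⟩
    ⟨Set.mem_univ b, Set.mem_Iic.mpr le_rfl⟩ hab

theorem ConcaveOn.continuous_univ {g : ℝ → ℝ} (hg : ConcaveOn ℝ Set.univ g) : Continuous g :=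
  continuousOn_univ.mp (hg.continuousOn isOpen_univ)

section SumOfMonotone

variable {ι : Type*} {s : Finset ι} {f : ι → ℝ → ℝ}

theorem sum_apply_le_sum_sub_inf' (hs : s.Nonempty) (hf : ∀ i ∈ s, Monotone (f i))
    {L : ι → ℝ} (hfL : ∀ i ∈ s, ∀ x, f i x ≤ L i) {y : ι → ℝ} {c : ℝ}
    (hy : ∑ i ∈ s, y i ≤ ∑ _i ∈ s, c) :
    ∑ i ∈ s, f i (y i) ≤ ∑ i ∈ s, L i - s.inf' hs fun i => L i - f i c := by
  classical
  obtain ⟨j, hj, hyj⟩ := exists_le_of_sum_le hs hy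
  calc ∑ i ∈ s, f i (y i) = f j (y j) + ∑ i ∈ s.erase j, f i (y i) := (add_sum_erase _ _ hj).symm
    _ ≤ f j c + ∑ i ∈ s.erase j, L i :=
      add_le_add (hf j hj hyj) (sum_le_sum fun i hi => hfL i (mem_of_mem_erase hi) _)
    _ = ∑ i ∈ s, L i - (L j - f j c) := by rw [← add_sum_erase _ _ hj]; ring
    _ ≤ _ := sub_le_sub_left (inf'_le (fun i => L i - f i c) hj) _

theorem exists_lt_sum_apply_of_not_bddAbove (hf : ∀ i ∈ s, Monotone (f i)) {j : ι}
    (hj : j ∈ s) (hfj : ¬BddAbove (Set.range (f j))) (K : ℝ) :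
    ∃ x, 0 < x ∧ K < ∑ i ∈ s, f i x := by
  classical
  obtain ⟨_, ⟨x₀, rfl⟩, hx₀⟩ := not_bddAbove_iff.mp hfj (K - ∑ i ∈ s.erase j, f i 0)
  refine ⟨max x₀ 1, by positivity, ?_⟩
  have h₁ : f j x₀ ≤ f j (max x₀ 1) := hf j hj (le_max_left _ _)
  have h₂ : ∑ i ∈ s.erase j, f i 0 ≤ ∑ i ∈ s.erase j, f i (max x₀ 1) :=
    sum_le_sum fun i hi => hf i (mem_of_mem_erase hi) (by positivity)
  rw [← add_sum_erase _ _ hj]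
  linarith

theorem exists_lt_sum_apply_of_lt_sum_iSup (hf : ∀ i ∈ s, Monotone (f i))
    (hbdd : ∀ i ∈ s, BddAbove (Set.range (f i))) {K : ℝ} (hK : K < ∑ i ∈ s, ⨆ x, f i x) :
    ∃ x, 0 < x ∧ K < ∑ i ∈ s, f i x :=
  have hlim : Tendsto (fun x => ∑ i ∈ s, f i x) atTop (𝓝 (∑ i ∈ s, ⨆ x, f i x)) :=
    tendsto_finsetSum _ fun i hi => tendsto_atTop_ciSup (hf i hi) (hbdd i hi)
  ((eventually_gt_atTop 0).and (hlim.eventually (lt_mem_nhds hK))).exists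

end SumOfMonotone

def allocValues [MeasurableSpace Ω] (μ : Measure Ω) (T : ℕ) (ℱ : ℕ → MeasurableSpace Ω)
    (u : ℕ → ℝ → ℝ) (B : ℕ → Ω → ℝ) (V : Ω → ℝ) : Set ℝ :=
  {s | ∃ Y, IsAlloc μ T ℱ B V Y ∧ s = allocVal μ T u B Y}

section Utility

variable [mΩ : MeasurableSpace Ω] {μ : Measure Ω} {T : ℕ} {ℱ : ℕ → MeasurableSpace Ω}
  {u : ℕ → ℝ → ℝ} {B : ℕ → Ω → ℝ} {V V₁ V₂ D : Ω → ℝ} {Y Y₁ Y₂ : ℕ → Ω → ℝ}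

theorem allocVal_le_allocVal_add_single [IsFiniteMeasure μ] (hℱ : ∀ t, ℱ t ≤ mΩ)
    (hB : IsDiscount T ℱ B) (hT : 1 ≤ T) (hu_mono : Monotone (u T))
    (hu_cont : Continuous (u T)) (hY : IsAlloc μ T ℱ B V Y) (hD : EssBddMeasurable (ℱ T) μ D)
    (hD₀ : ∀ᵐ ω ∂μ, 0 ≤ D ω) :
    allocVal μ T u B Y ≤ allocVal μ T u B (Y + Pi.single T (B T * D)) := by
  have hTT : T ∈ Icc 1 T := mem_Icc.mpr ⟨hT, le_rfl⟩
  refine sum_le_sum fun t ht => ?_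
  rcases eq_or_ne t T with rfl | hne
  · refine integral_mono_ae (hY.integrable_comp hℱ hB ht hu_cont)
      ((hY.add (isAlloc_single hB hT hD)).integrable_comp hℱ hB ht hu_cont) ?_
    filter_upwards [hD₀] with ω hω
    have hB₁ := hB.one_le t ht ω
    refine hu_mono ?_
    simp only [Pi.add_apply, Pi.single_eq_same, Pi.mul_apply, add_div]
    rw [mul_div_cancel_left₀ _ (by linarith)]
    linarith
  · simp [Pi.single_eq_of_ne hne]

theorem allocVal_smul_add_smul_le [IsFiniteMeasure μ] (hℱ : ∀ t, ℱ t ≤ mΩ)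
    (hB : IsDiscount T ℱ B) (hu_conc : ∀ t ∈ Icc 1 T, ConcaveOn ℝ Set.univ (u t))
    (hY₁ : IsAlloc μ T ℱ B V₁ Y₁) (hY₂ : IsAlloc μ T ℱ B V₂ Y₂) {a b : ℝ} (ha : 0 ≤ a)
    (hb : 0 ≤ b) (hab : a + b = 1) :
    a * allocVal μ T u B Y₁ + b * allocVal μ T u B Y₂ ≤ allocVal μ T u B (a • Y₁ + b • Y₂) := by
  rw [allocVal, allocVal, mul_sum, mul_sum, ← sum_add_distrib]
  refine sum_le_sum fun t ht => ?_
  have hu_cont := (hu_conc t ht).continuous_univ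
  have h₁ := (hY₁.integrable_comp hℱ hB ht hu_cont).const_mul a
  have h₂ := (hY₂.integrable_comp hℱ hB ht hu_cont).const_mul b
  rw [← integral_const_mul, ← integral_const_mul, ← integral_add h₁ h₂]
  refine integral_mono (h₁.add h₂)
    (((hY₁.const_smul a).add (hY₂.const_smul b)).integrable_comp hℱ hB ht hu_cont) fun ω => ?_
  simpa [add_div, mul_div_assoc] using
    (hu_conc t ht).2 (Set.mem_univ (Y₁ t ω / B t ω)) (Set.mem_univ (Y₂ t ω / B t ω)) ha hb hab

theorem IsAlloc.allocVal_le [IsProbabilityMeasure μ] (hℱ : ∀ t, ℱ t ≤ mΩ)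
    (hB : IsDiscount T ℱ B) (hu_cont : ∀ t ∈ Icc 1 T, Continuous (u t))
    (hY : IsAlloc μ T ℱ B V Y) {K : ℝ} (hK : ∀ᵐ ω ∂μ, ∑ t ∈ Icc 1 T, u t (Y t ω / B t ω) ≤ K) :
    allocVal μ T u B Y ≤ K := by
  have hint : ∀ t ∈ Icc 1 T, Integrable (fun ω => u t (Y t ω / B t ω)) μ := fun t ht =>
    hY.integrable_comp hℱ hB ht (hu_cont t ht)
  rw [allocVal, ← integral_finsetSum _ hint]
  exact (integral_mono_ae (integrable_finsetSum _ hint) (integrable_const K) hK).trans_eq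
    (by simp)

theorem allocValues_nonempty (hB : IsDiscount T ℱ B) (hT : 1 ≤ T)
    (hV : EssBddMeasurable (ℱ T) μ V) : (allocValues μ T ℱ u B V).Nonempty :=
  ⟨_, _, isAlloc_single hB hT hV, rfl⟩

theorem le_util (hU : BddAbove (allocValues μ T ℱ u B V)) (hY : IsAlloc μ T ℱ B V Y) :
    allocVal μ T u B Y ≤ Util μ T ℱ u B V :=
  le_csSup hU ⟨Y, hY, rfl⟩

theorem util_le (hB : IsDiscount T ℱ B) (hT : 1 ≤ T) (hV : EssBddMeasurable (ℱ T) μ V) {c : ℝ}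
    (h : ∀ Y, IsAlloc μ T ℱ B V Y → allocVal μ T u B Y ≤ c) : Util μ T ℱ u B V ≤ c :=
  csSup_le (allocValues_nonempty hB hT hV) fun _ ⟨Y, hY, hs⟩ => hs ▸ h Y hY

theorem util_mono [IsFiniteMeasure μ] (hℱ : ∀ t, ℱ t ≤ mΩ) (hB : IsDiscount T ℱ B) (hT : 1 ≤ T)
    (hu_mono : Monotone (u T)) (hu_cont : Continuous (u T))
    (hU : BddAbove (allocValues μ T ℱ u B V₂)) (hV₁ : EssBddMeasurable (ℱ T) μ V₁)
    (hV₂ : EssBddMeasurable (ℱ T) μ V₂) (h : V₁ ≤ᵐ[μ] V₂) :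
    Util μ T ℱ u B V₁ ≤ Util μ T ℱ u B V₂ := by
  refine util_le hB hT hV₁ fun Y hY => ?_
  have hD := hV₂.sub hV₁
  refine (allocVal_le_allocVal_add_single hℱ hB hT hu_mono hu_cont hY hD
    (h.mono fun ω => sub_nonneg.mpr)).trans (le_util hU ?_)
  simpa using hY.add (isAlloc_single hB hT hD)

theorem smul_util_add_smul_util_le [IsFiniteMeasure μ] (hℱ : ∀ t, ℱ t ≤ mΩ)
    (hB : IsDiscount T ℱ B) (hT : 1 ≤ T) (hu_conc : ∀ t ∈ Icc 1 T, ConcaveOn ℝ Set.univ (u t))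
    (hU : ∀ V, EssBddMeasurable (ℱ T) μ V → BddAbove (allocValues μ T ℱ u B V))
    (hV₁ : EssBddMeasurable (ℱ T) μ V₁) (hV₂ : EssBddMeasurable (ℱ T) μ V₂) {a b : ℝ}
    (ha : 0 ≤ a) (hb : 0 ≤ b) (hab : a + b = 1) :
    a * Util μ T ℱ u B V₁ + b * Util μ T ℱ u B V₂ ≤ Util μ T ℱ u B (a • V₁ + b • V₂) := by
  have hne₁ := allocValues_nonempty (u := u) hB hT hV₁
  have hne₂ := allocValues_nonempty (u := u) hB hT hV₂
  change a * sSup (allocValues μ T ℱ u B V₁) + b * sSup (allocValues μ T ℱ u B V₂) ≤ _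
  rw [← smul_eq_mul, ← smul_eq_mul, ← Real.sSup_smul_of_nonneg ha,
    ← Real.sSup_smul_of_nonneg hb, ← csSup_add (hne₁.smul_set) ((hU V₁ hV₁).smul_of_nonneg ha)
      (hne₂.smul_set) ((hU V₂ hV₂).smul_of_nonneg hb)]
  refine csSup_le (hne₁.smul_set.add hne₂.smul_set) ?_
  rintro _ ⟨_, ⟨_, ⟨Y₁, hY₁, rfl⟩, rfl⟩, _, ⟨_, ⟨Y₂, hY₂, rfl⟩, rfl⟩, rfl⟩
  exact (allocVal_smul_add_smul_le hℱ hB hu_conc hY₁ hY₂ ha hb hab).trans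
    (le_util (hU _ ((hV₁.const_smul a).add (hV₂.const_smul b)))
      ((hY₁.const_smul a).add (hY₂.const_smul b)))

theorem concaveOn_util_add [IsFiniteMeasure μ] (hℱ : ∀ t, ℱ t ≤ mΩ) (hB : IsDiscount T ℱ B)
    (hT : 1 ≤ T) (hu_conc : ∀ t ∈ Icc 1 T, ConcaveOn ℝ Set.univ (u t))
    (hU : ∀ V, EssBddMeasurable (ℱ T) μ V → BddAbove (allocValues μ T ℱ u B V))
    (hV : EssBddMeasurable (ℱ T) μ V) :
    ConcaveOn ℝ Set.univ fun x => Util μ T ℱ u B fun ω => V ω + x := by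
  refine ⟨convex_univ, fun x _ y _ a b ha hb hab => ?_⟩
  have hcomb : a • (fun ω => V ω + x) + b • (fun ω => V ω + y) =
      fun ω => V ω + (a • x + b • y) := by
    funext ω
    simp only [Pi.add_apply, Pi.smul_apply, smul_eq_mul]
    linear_combination V ω * hab
  simpa only [smul_eq_mul, hcomb] using smul_util_add_smul_util_le hℱ hB hT hu_conc hU
    (hV.add_const x) (hV.add_const y) ha hb hab

theorem sum_le_util_const [IsProbabilityMeasure μ] (hB : IsDiscount T ℱ B) {c : ℝ}
    (hU : BddAbove (allocValues μ T ℱ u B fun _ => T * c)) :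
    ∑ t ∈ Icc 1 T, u t c ≤ Util μ T ℱ u B fun _ => T * c := by
  refine le_of_eq_of_le (sum_congr rfl fun t ht => ?_) (le_util hU (isAlloc_const hB c))
  have hdiv : ∀ ω, c * B t ω / B t ω = c := fun ω =>
    mul_div_cancel_right₀ c (by linarith [hB.one_le t ht ω])
  simp [hdiv]

theorem util_le_sum_iSup_sub_inf' [IsProbabilityMeasure μ] (hℱ : ∀ t, ℱ t ≤ mΩ)
    (hB : IsDiscount T ℱ B) (hT : 1 ≤ T) (hu_conc : ∀ t ∈ Icc 1 T, ConcaveOn ℝ Set.univ (u t))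
    (hu_mono : ∀ t ∈ Icc 1 T, Monotone (u t))
    (hbdd : ∀ t ∈ Icc 1 T, BddAbove (Set.range (u t))) (hV : EssBddMeasurable (ℱ T) μ V)
    {c : ℝ} (hc : ∀ᵐ ω ∂μ, V ω ≤ T * c) :
    Util μ T ℱ u B V ≤ ∑ t ∈ Icc 1 T, (⨆ x, u t x) -
      (Icc 1 T).inf' (nonempty_Icc.mpr hT) fun t => (⨆ x, u t x) - u t c := by
  refine util_le hB hT hV fun Y hY =>
    hY.allocVal_le hℱ hB (fun t ht => (hu_conc t ht).continuous_univ) ?_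
  filter_upwards [hY.2, hc] with ω hsum hω
  refine sum_apply_le_sum_sub_inf' _ hu_mono (fun t ht x => le_ciSup (hbdd t ht) x) ?_
  rwa [hsum, sum_const, Nat.card_Icc, nsmul_eq_mul, Nat.add_sub_cancel]

theorem exists_util_lt_sum [IsProbabilityMeasure μ] (hℱ : ∀ t, ℱ t ≤ mΩ)
    (hB : IsDiscount T ℱ B) (hT : 1 ≤ T) (hu_conc : ∀ t ∈ Icc 1 T, ConcaveOn ℝ Set.univ (u t))
    (hu_mono : ∀ t ∈ Icc 1 T, StrictMono (u t)) (hV : EssBddMeasurable (ℱ T) μ V) :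
    ∃ x, 0 < x ∧ Util μ T ℱ u B V < ∑ t ∈ Icc 1 T, u t x := by
  have hmono : ∀ t ∈ Icc 1 T, Monotone (u t) := fun t ht => (hu_mono t ht).monotone
  by_cases hbdd : ∀ t ∈ Icc 1 T, BddAbove (Set.range (u t))
  · obtain ⟨C, hC⟩ := hV.2
    have hVC : ∀ᵐ ω ∂μ, V ω ≤ T * |C| := by
      filter_upwards [hC] with ω hω
      have hT' : (1 : ℝ) ≤ T := by exact_mod_cast hT
      nlinarith [le_abs_self (V ω), le_abs_self C, abs_nonneg C]
    have hgap : 0 < (Icc 1 T).inf' (nonempty_Icc.mpr hT) fun t => (⨆ x, u t x) - u t |C| :=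
      (lt_inf'_iff _).mpr fun t ht =>
        sub_pos.mpr ((hu_mono t ht (lt_add_one _)).trans_le (le_ciSup (hbdd t ht) _))
    exact exists_lt_sum_apply_of_lt_sum_iSup hmono hbdd
      ((util_le_sum_iSup_sub_inf' hℱ hB hT hu_conc hmono hbdd hV hVC).trans_lt
        (sub_lt_self _ hgap))
  · obtain ⟨t, ht, hunb⟩ := not_forall₂.mp hbdd
    exact exists_lt_sum_apply_of_not_bddAbove hmono ht hunb _

theorem exists_util_lt_util_add [IsProbabilityMeasure μ] (hℱ : ∀ t, ℱ t ≤ mΩ)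
    (hB : IsDiscount T ℱ B) (hT : 1 ≤ T) (hu_conc : ∀ t ∈ Icc 1 T, ConcaveOn ℝ Set.univ (u t))
    (hu_mono : ∀ t ∈ Icc 1 T, StrictMono (u t))
    (hU : ∀ V, EssBddMeasurable (ℱ T) μ V → BddAbove (allocValues μ T ℱ u B V))
    (hV : EssBddMeasurable (ℱ T) μ V) :
    ∃ c, 0 < c ∧ Util μ T ℱ u B V < Util μ T ℱ u B fun ω => V ω + c := by
  obtain ⟨x, hx, hlt⟩ := exists_util_lt_sum hℱ hB hT hu_conc hu_mono hV
  obtain ⟨C, hC⟩ := hV.2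
  have hTT : T ∈ Icc 1 T := mem_Icc.mpr ⟨hT, le_rfl⟩
  have hT' : (0 : ℝ) < T := by exact_mod_cast hT
  have hV' : EssBddMeasurable (ℱ T) μ fun ω => V ω + (T * x + |C|) := hV.add_const _
  refine ⟨T * x + |C|, add_pos_of_pos_of_nonneg (mul_pos hT' hx) (abs_nonneg C),
    hlt.trans_le ((sum_le_util_const hB (hU _ (.const _))).trans ?_)⟩
  refine util_mono hℱ hB hT (hu_mono T hTT).monotone
    (hu_conc T hTT).continuous_univ (hU _ hV') (.const _) hV' ?_
  filter_upwards [hC] with ω hω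
  linarith [neg_abs_le (V ω), le_abs_self C]

theorem strictMono_util_add [IsProbabilityMeasure μ] (hℱ : ∀ t, ℱ t ≤ mΩ)
    (hB : IsDiscount T ℱ B) (hT : 1 ≤ T) (hu_conc : ∀ t ∈ Icc 1 T, ConcaveOn ℝ Set.univ (u t))
    (hu_mono : ∀ t ∈ Icc 1 T, StrictMono (u t))
    (hU : ∀ V, EssBddMeasurable (ℱ T) μ V → BddAbove (allocValues μ T ℱ u B V))
    (hV : EssBddMeasurable (ℱ T) μ V) :
    StrictMono fun x => Util μ T ℱ u B fun ω => V ω + x := by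
  refine (concaveOn_util_add hℱ hB hT hu_conc hU hV).strictMono_of_forall_exists_lt fun x => ?_
  obtain ⟨c, hc, hlt⟩ :=
    exists_util_lt_util_add hℱ hB hT hu_conc hu_mono hU (hV.add_const x)
  exact ⟨x + c, lt_add_of_pos_right x hc, by simpa [add_assoc] using hlt⟩

theorem strictMono_util_const [IsProbabilityMeasure μ] (hℱ : ∀ t, ℱ t ≤ mΩ)
    (hB : IsDiscount T ℱ B) (hT : 1 ≤ T)
    (hu_conc : ∀ t ∈ Icc 1 T, ConcaveOn ℝ Set.univ (u t))
    (hu_mono : ∀ t ∈ Icc 1 T, StrictMono (u t))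
    (hU : ∀ V, EssBddMeasurable (ℱ T) μ V → BddAbove (allocValues μ T ℱ u B V)) :
    StrictMono fun c => Util μ T ℱ u B fun _ => c := by
  simpa using strictMono_util_add hℱ hB hT hu_conc hu_mono hU (.const 0)

theorem util_add_lt_util_const [IsProbabilityMeasure μ] (hℱ : ∀ t, ℱ t ≤ mΩ)
    (hB : IsDiscount T ℱ B) (hT : 1 ≤ T) (hu_conc : ∀ t ∈ Icc 1 T, ConcaveOn ℝ Set.univ (u t))
    (hu_mono : ∀ t ∈ Icc 1 T, StrictMono (u t))
    (hU : ∀ V, EssBddMeasurable (ℱ T) μ V → BddAbove (allocValues μ T ℱ u B V))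
    (hV : EssBddMeasurable (ℱ T) μ V) {C : ℝ} (hC : ∀ᵐ ω ∂μ, |V ω| ≤ C) (a : ℝ) :
    (Util μ T ℱ u B fun ω => V ω + (a - C - 1)) < Util μ T ℱ u B fun _ => a := by
  have hTT : T ∈ Icc 1 T := mem_Icc.mpr ⟨hT, le_rfl⟩
  refine (util_mono hℱ hB hT (hu_mono T hTT).monotone (hu_conc T hTT).continuous_univ
    (hU _ (.const _)) (hV.add_const _) (.const (a - 1)) ?_).trans_lt
      (strictMono_util_const hℱ hB hT hu_conc hu_mono hU (sub_one_lt a))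
  filter_upwards [hC] with ω hω
  linarith [le_abs_self (V ω)]

theorem util_const_lt_util_add [IsProbabilityMeasure μ] (hℱ : ∀ t, ℱ t ≤ mΩ)
    (hB : IsDiscount T ℱ B) (hT : 1 ≤ T) (hu_conc : ∀ t ∈ Icc 1 T, ConcaveOn ℝ Set.univ (u t))
    (hu_mono : ∀ t ∈ Icc 1 T, StrictMono (u t))
    (hU : ∀ V, EssBddMeasurable (ℱ T) μ V → BddAbove (allocValues μ T ℱ u B V))
    (hV : EssBddMeasurable (ℱ T) μ V) {C : ℝ} (hC : ∀ᵐ ω ∂μ, |V ω| ≤ C) (a : ℝ) :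
    (Util μ T ℱ u B fun _ => a) < Util μ T ℱ u B fun ω => V ω + (a + C + 1) := by
  have hTT : T ∈ Icc 1 T := mem_Icc.mpr ⟨hT, le_rfl⟩
  refine (strictMono_util_const hℱ hB hT hu_conc hu_mono hU (lt_add_one a)).trans_le
    (util_mono hℱ hB hT (hu_mono T hTT).monotone (hu_conc T hTT).continuous_univ
      (hU _ (hV.add_const _)) (.const (a + 1)) (hV.add_const _) ?_)
  filter_upwards [hC] with ω hω
  linarith [neg_abs_le (V ω)]

end Utility

end IndifferencePrice

theorem indifference_price_exists_unique_general
    {Ω : Type*} [mΩ : MeasurableSpace Ω] (μ : Measure Ω) [IsProbabilityMeasure μ]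
    (T : ℕ) (hT : 1 ≤ T)
    (ℱ : ℕ → MeasurableSpace Ω) (hℱmono : Monotone ℱ) (hℱle : ∀ t, ℱ t ≤ mΩ)
    (r : ℕ → Ω → ℝ)
    (hr_meas : ∀ t ∈ Finset.Icc 1 T, Measurable[ℱ (t - 1)] (r t))
    (hr_nonneg : ∀ t ∈ Finset.Icc 1 T, ∀ ω, 0 ≤ r t ω)
    (hr_bdd : ∀ t ∈ Finset.Icc 1 T, ∃ C : ℝ, ∀ ω, r t ω ≤ C)
    (B : ℕ → Ω → ℝ) (hB : ∀ t ω, B t ω = ∏ k ∈ Finset.Icc 1 t, (1 + r k ω))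
    (u : ℕ → ℝ → ℝ)
    (hu_conc : ∀ t ∈ Finset.Icc 1 T, StrictConcaveOn ℝ (Set.univ : Set ℝ) (u t))
    (hu_deriv : ∀ t ∈ Finset.Icc 1 T, ∀ x : ℝ, 0 < deriv (u t) x)
    (hUfin : ∀ V : Ω → ℝ, Measurable[ℱ T] V → (∃ C : ℝ, ∀ᵐ ω ∂μ, |V ω| ≤ C) →
      BddAbove {s : ℝ | ∃ Y, IsAlloc μ T ℱ B V Y ∧ s = allocVal μ T u B Y})
    (Z : Ω → ℝ)
    (hZmeas : Measurable[ℱ T] Z) (hZbdd : ∃ C : ℝ, ∀ᵐ ω ∂μ, |Z ω| ≤ C)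
    (w : ℝ) :
    (∃! h : ℝ, Util μ T ℱ u B (fun ω => w + h - Z ω) = Util μ T ℱ u B (fun _ => w)) ∧
    ConcaveOn ℝ (Set.univ : Set ℝ) (fun x => Util μ T ℱ u B (fun ω => w + x - Z ω)) ∧
    Continuous (fun x => Util μ T ℱ u B (fun ω => w + x - Z ω)) ∧
    StrictMono (fun x => Util μ T ℱ u B (fun ω => w + x - Z ω)) ∧
    (∃ x₀ : ℝ, ∀ x ≤ x₀,
      Util μ T ℱ u B (fun ω => w + x - Z ω) < Util μ T ℱ u B (fun _ => w)) ∧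
    (∃ x₁ : ℝ, ∀ x, x₁ ≤ x →
      Util μ T ℱ u B (fun _ => w) < Util μ T ℱ u B (fun ω => w + x - Z ω)) := by
  have hdisc := isDiscount_of_rate hℱmono hr_meas hr_nonneg hr_bdd hB
  have hu_conc' : ∀ t ∈ Icc 1 T, ConcaveOn ℝ Set.univ (u t) := fun t ht =>
    (hu_conc t ht).concaveOn
  have hu_mono : ∀ t ∈ Icc 1 T, StrictMono (u t) := fun t ht =>
    strictMono_of_deriv_pos (hu_deriv t ht)
  have hU : ∀ V, EssBddMeasurable (ℱ T) μ V → BddAbove (allocValues μ T ℱ u B V) :=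
    fun V hV => hUfin V hV.1 hV.2
  have hV : EssBddMeasurable (ℱ T) μ fun ω => w - Z ω :=
    (EssBddMeasurable.const w).sub ⟨hZmeas, hZbdd⟩
  obtain ⟨C, hC⟩ := hV.2
  simp only [add_sub_right_comm w]
  have hconc := concaveOn_util_add hℱle hdisc hT hu_conc' hU hV
  have hg := strictMono_util_add hℱle hdisc hT hu_conc' hu_mono hU hV
  have hlow := util_add_lt_util_const hℱle hdisc hT hu_conc' hu_mono hU hV hC w
  have hhigh := util_const_lt_util_add hℱle hdisc hT hu_conc' hu_mono hU hV hC w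
  obtain ⟨h, hh⟩ := intermediate_value_univ _ _ hconc.continuous_univ ⟨hlow.le, hhigh.le⟩
  exact ⟨⟨h, hh, fun y hy => hg.injective (hy.trans hh.symm)⟩, hconc, hconc.continuous_univ, hg,
    ⟨_, fun x hx => (hg.monotone hx).trans_lt hlow⟩,
    ⟨_, fun x hx => hhigh.trans_le (hg.monotone hx)⟩⟩

/-- Existence and uniqueness of the indifference price (Definition 2.6 and the
discussion preceding it): `x ↦ U(w + x - Z)` is concave, continuous, strictly
increasing, eventually below and eventually above `U(w)`, and there is a unique
`H(Z)` with `U(w + H(Z) - Z) = U(w)`. -/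
theorem indifference_price_exists_unique
    {Ω : Type*} [mΩ : MeasurableSpace Ω] (μ : Measure Ω) [IsProbabilityMeasure μ]
    (T : ℕ) (hT : 1 ≤ T)
    (ℱ : ℕ → MeasurableSpace Ω) (hℱmono : Monotone ℱ) (hℱle : ∀ t, ℱ t ≤ mΩ)
    (r : ℕ → Ω → ℝ)
    (hr_meas : ∀ t ∈ Finset.Icc 1 T, Measurable[ℱ (t - 1)] (r t))
    (hr_nonneg : ∀ t ∈ Finset.Icc 1 T, ∀ ω, 0 ≤ r t ω)
    (hr_bdd : ∀ t ∈ Finset.Icc 1 T, ∃ C : ℝ, ∀ ω, r t ω ≤ C)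
    (B : ℕ → Ω → ℝ) (hB : ∀ t ω, B t ω = ∏ k ∈ Finset.Icc 1 t, (1 + r k ω))
    (u : ℕ → ℝ → ℝ)
    (hu_conc : ∀ t ∈ Finset.Icc 1 T, StrictConcaveOn ℝ (Set.univ : Set ℝ) (u t))
    (hu_diff : ∀ t ∈ Finset.Icc 1 T, ContDiff ℝ 1 (u t))
    (hu_deriv : ∀ t ∈ Finset.Icc 1 T, ∀ x : ℝ, 0 < deriv (u t) x)
    (hUfin : ∀ V : Ω → ℝ, Measurable[ℱ T] V → (∃ C : ℝ, ∀ᵐ ω ∂μ, |V ω| ≤ C) →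
      BddAbove {s : ℝ | ∃ Y, IsAlloc μ T ℱ B V Y ∧ s = allocVal μ T u B Y})
    (Z : Ω → ℝ)
    (hZmeas : Measurable[ℱ T] Z) (hZbdd : ∃ C : ℝ, ∀ᵐ ω ∂μ, |Z ω| ≤ C)
    (w : ℝ) :
    (∃! h : ℝ, Util μ T ℱ u B (fun ω => w + h - Z ω) = Util μ T ℱ u B (fun _ => w)) ∧
    ConcaveOn ℝ (Set.univ : Set ℝ) (fun x => Util μ T ℱ u B (fun ω => w + x - Z ω)) ∧
    Continuous (fun x => Util μ T ℱ u B (fun ω => w + x - Z ω)) ∧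
    StrictMono (fun x => Util μ T ℱ u B (fun ω => w + x - Z ω)) ∧
    (∃ x₀ : ℝ, ∀ x ≤ x₀,
      Util μ T ℱ u B (fun ω => w + x - Z ω) < Util μ T ℱ u B (fun _ => w)) ∧
    (∃ x₁ : ℝ, ∀ x, x₁ ≤ x →
      Util μ T ℱ u B (fun _ => w) < Util μ T ℱ u B (fun ω => w + x - Z ω)) :=
  indifference_price_exists_unique_general (mΩ := mΩ) μ T hT ℱ hℱmono hℱle r hr_meas hr_nonneg
    hr_bdd B hB u hu_conc hu_deriv hUfin Z hZmeas hZbdd w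
end
end

section
/- Characterization of optimality by the first order condition: for W ∈ L^∞ and (X_t)_{t∈𝕋} ∈ A(W), the allocation (X_t) is optimal (i.e. ∑_{t∈𝕋} E[u_t(X̃_t)] = U(W)) if and only if the process (u_t'(X̃_t))_{t∈𝕋} is an (F_t)-martingale. -/
open MeasureTheory Finset Real

noncomputable section

/-!
Necessity: for `s ≤ t` and `A ∈ F_s`, shifting `ε 1_A` of discounted wealth from date `t` to
date `s` keeps `X` admissible for every `ε ∈ ℝ`. The value of the shifted allocation is
differentiable in `ε` with derivative `E[1_A u_s'(X̃_s)] - E[1_A u_t'(X̃_t)]` at `0`, and is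
maximal there, so this derivative vanishes: the martingale identity tested on `A`.

Sufficiency: by concavity, the gain of `Y ∈ A(W)` over `X` is at most
`∑_t E[(Ỹ_t - X̃_t) u_t'(X̃_t)]`. Under the martingale property `u_t'(X̃_t) = E[u_T'(X̃_T) | F_t]`,
and `Ỹ_t - X̃_t` is bounded and `F_t`-measurable, so the sum is
`E[(∑_t (Ỹ_t - X̃_t)) u_T'(X̃_T)] = E[(W - W) u_T'(X̃_T)] = 0`.
-/

lemma ConcaveOn.sub_le_sub_mul_deriv {f : ℝ → ℝ} (hf : ConcaveOn ℝ Set.univ f) {x : ℝ}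
    (hd : DifferentiableAt ℝ f x) (y : ℝ) : f y - f x ≤ (y - x) * deriv f x := by
  rcases lt_trichotomy x y with h | rfl | h
  · have hs := hf.slope_le_deriv (Set.mem_univ x) (Set.mem_univ y) h hd
    rw [slope_def_field, div_le_iff₀ (by linarith)] at hs
    linarith
  · simp
  · have hs := hf.deriv_le_slope (Set.mem_univ y) (Set.mem_univ x) h hd
    rw [slope_def_field, le_div_iff₀ (by linarith)] at hs
    linarith

lemma Continuous.exists_abs_le_of_abs_le {g : ℝ → ℝ} (hg : Continuous g) (C : ℝ) :
    ∃ K, ∀ x, |x| ≤ C → |g x| ≤ K := by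
  obtain ⟨K, hK⟩ := (isCompact_Icc (a := -C) (b := C)).exists_bound_of_continuousOn
    hg.continuousOn
  exact ⟨K, fun x hx => hK x (Set.mem_Icc.mpr (abs_le.mp hx))⟩

section Integrals

variable {Ω : Type*} [mΩ : MeasurableSpace Ω] {μ : Measure Ω} [IsFiniteMeasure μ]

lemma integrable_comp_of_ae_abs_le {g : ℝ → ℝ} (hg : Continuous g) {f : Ω → ℝ}
    (hf : AEStronglyMeasurable f μ) {C : ℝ} (hC : ∀ᵐ ω ∂μ, |f ω| ≤ C) :
    Integrable (fun ω => g (f ω)) μ := by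
  obtain ⟨K, hK⟩ := hg.exists_abs_le_of_abs_le C
  exact .of_bound (hg.comp_aestronglyMeasurable hf) K (hC.mono fun ω h => hK _ h)

lemma hasDerivAt_integral_comp_add_mul {g : ℝ → ℝ} (hg : ContDiff ℝ 1 g) {ξ ζ : Ω → ℝ}
    (hξ : AEStronglyMeasurable ξ μ) (hζ : AEStronglyMeasurable ζ μ) {C D : ℝ}
    (hξC : ∀ᵐ ω ∂μ, |ξ ω| ≤ C) (hζD : ∀ᵐ ω ∂μ, |ζ ω| ≤ D) :
    HasDerivAt (fun ε => ∫ ω, g (ξ ω + ε * ζ ω) ∂μ) (∫ ω, ζ ω * deriv g (ξ ω) ∂μ) 0 := by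
  have hg' : Continuous (deriv g) := hg.continuous_deriv le_rfl
  obtain ⟨K, hK⟩ := hg'.exists_abs_le_of_abs_le (C + D)
  have hmeas : ∀ ε : ℝ, AEStronglyMeasurable (fun ω => ξ ω + ε * ζ ω) μ :=
    fun ε => hξ.add (hζ.const_mul ε)
  have hbound : ∀ᵐ ω ∂μ, ∀ ε ∈ Metric.ball (0 : ℝ) 1,
      ‖deriv g (ξ ω + ε * ζ ω) * ζ ω‖ ≤ K * D := by
    filter_upwards [hξC, hζD] with ω hξω hζω ε hε
    have hε1 : |ε| ≤ 1 := (mem_ball_zero_iff.mp hε).le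
    have hεζ : |ε * ζ ω| ≤ D := by
      rw [abs_mul]; nlinarith [abs_nonneg (ζ ω), abs_nonneg ε]
    have hg'ω := hK _ ((abs_add_le _ _).trans (add_le_add hξω hεζ))
    rw [Real.norm_eq_abs, abs_mul]
    exact mul_le_mul hg'ω hζω (abs_nonneg _) ((abs_nonneg _).trans hg'ω)
  have hdiff : ∀ᵐ ω ∂μ, ∀ ε ∈ Metric.ball (0 : ℝ) 1,
      HasDerivAt (fun ε => g (ξ ω + ε * ζ ω)) (deriv g (ξ ω + ε * ζ ω) * ζ ω) ε :=
    .of_forall fun ω ε _ => ((hg.differentiable one_ne_zero _).hasDerivAt).comp ε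
      ((hasDerivAt_mul_const (ζ ω)).const_add (ξ ω))
  have key := hasDerivAt_integral_of_dominated_loc_of_deriv_le (Metric.ball_mem_nhds 0 one_pos)
    (.of_forall fun ε => hg.continuous.comp_aestronglyMeasurable (hmeas ε))
    (integrable_comp_of_ae_abs_le hg.continuous (hmeas 0) (C := C) (by simpa using hξC))
    ((hg'.comp_aestronglyMeasurable (hmeas 0)).mul hζ) hbound (integrable_const _) hdiff
  simpa only [zero_mul, add_zero, mul_comm (ζ _)] using key.2

lemma integral_comp_sub_le_integral_mul_deriv {g : ℝ → ℝ} (hg : ConcaveOn ℝ Set.univ g)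
    (hg' : ContDiff ℝ 1 g) {ξ η : Ω → ℝ} (hξ : AEStronglyMeasurable ξ μ)
    (hη : AEStronglyMeasurable η μ) {C D : ℝ} (hξC : ∀ᵐ ω ∂μ, |ξ ω| ≤ C)
    (hηD : ∀ᵐ ω ∂μ, |η ω| ≤ D) :
    ∫ ω, g (η ω) ∂μ - ∫ ω, g (ξ ω) ∂μ ≤ ∫ ω, (η ω - ξ ω) * deriv g (ξ ω) ∂μ := by
  have hint : Integrable (fun ω => (η ω - ξ ω) * deriv g (ξ ω)) μ :=
    (integrable_comp_of_ae_abs_le (hg'.continuous_deriv le_rfl) hξ hξC).bdd_mul (hη.sub hξ)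
      (c := D + C) (by filter_upwards [hξC, hηD] with ω h₁ h₂
                       exact (abs_sub _ _).trans (add_le_add h₂ h₁))
  have hη' := integrable_comp_of_ae_abs_le hg'.continuous hη hηD
  have hξ' := integrable_comp_of_ae_abs_le hg'.continuous hξ hξC
  rw [← integral_sub hη' hξ']
  exact integral_mono (hη'.sub hξ') hint fun ω =>
    hg.sub_le_sub_mul_deriv ((hg'.differentiable one_ne_zero) _) _

end Integrals

lemma sum_integral_mul_condExp_eq_zero {Ω ι : Type*} [mΩ : MeasurableSpace Ω] {μ : Measure Ω}
    [IsFiniteMeasure μ] {s : Finset ι} {ℱ : ι → MeasurableSpace Ω} (hℱ : ∀ i, ℱ i ≤ mΩ)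
    {M : Ω → ℝ} (hM : Integrable M μ) {H : ι → Ω → ℝ}
    (hHm : ∀ i ∈ s, StronglyMeasurable[ℱ i] (H i))
    (hHb : ∀ i ∈ s, ∃ C, ∀ᵐ ω ∂μ, |H i ω| ≤ C) (hH : ∀ᵐ ω ∂μ, ∑ i ∈ s, H i ω = 0) :
    ∑ i ∈ s, ∫ ω, H i ω * μ[M | ℱ i] ω ∂μ = 0 := by
  have hpull : ∀ i ∈ s, ∫ ω, H i ω * μ[M | ℱ i] ω ∂μ = ∫ ω, H i ω * M ω ∂μ := fun i hi => by
    obtain ⟨C, hC⟩ := hHb i hi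
    calc ∫ ω, H i ω * μ[M | ℱ i] ω ∂μ = ∫ ω, μ[H i * M | ℱ i] ω ∂μ :=
          integral_congr_ae (condExp_stronglyMeasurable_mul_of_bound (hℱ i) (hHm i hi) hM C hC).symm
      _ = ∫ ω, H i ω * M ω ∂μ := integral_condExp (hℱ i)
  have hint : ∀ i ∈ s, Integrable (fun ω => H i ω * M ω) μ := fun i hi => by
    obtain ⟨C, hC⟩ := hHb i hi
    exact hM.bdd_mul ((hHm i hi).mono (hℱ i)).aestronglyMeasurable hC
  rw [sum_congr rfl hpull, ← integral_finsetSum s hint]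
  refine (integral_congr_ae (hH.mono fun ω hω => ?_)).trans (integral_zero Ω ℝ)
  rw [← sum_mul, hω, zero_mul]

structure IsDiscountProcess {Ω : Type*} (ℱ : ℕ → MeasurableSpace Ω) (T : ℕ) (B : ℕ → Ω → ℝ) :
    Prop where
  measurable : ∀ t ∈ Icc 1 T, Measurable[ℱ t] (B t)
  one_le : ∀ t ∈ Icc 1 T, ∀ ω, 1 ≤ B t ω
  le_const : ∀ t ∈ Icc 1 T, ∃ K, ∀ ω, B t ω ≤ K

lemma isDiscountProcess_prod_one_add {Ω : Type*} {ℱ : ℕ → MeasurableSpace Ω} (hℱ : Monotone ℱ)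
    {T : ℕ} {r : ℕ → Ω → ℝ} (hr_meas : ∀ t ∈ Icc 1 T, Measurable[ℱ (t - 1)] (r t))
    (hr_nonneg : ∀ t ∈ Icc 1 T, ∀ ω, 0 ≤ r t ω) (hr_bdd : ∀ t ∈ Icc 1 T, ∃ C : ℝ, ∀ ω, r t ω ≤ C)
    {B : ℕ → Ω → ℝ} (hB : ∀ t ω, B t ω = ∏ k ∈ Icc 1 t, (1 + r k ω)) :
    IsDiscountProcess ℱ T B := by
  have hsub : ∀ {t k}, t ∈ Icc 1 T → k ∈ Icc 1 t → k ∈ Icc 1 T := fun ht hk =>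
    mem_Icc.mpr ⟨(mem_Icc.mp hk).1, (mem_Icc.mp hk).2.trans (mem_Icc.mp ht).2⟩
  have hC : ∀ k, ∃ C : ℝ, k ∈ Icc 1 T → ∀ ω, r k ω ≤ C := fun k => by
    by_cases hk : k ∈ Icc 1 T
    · exact (hr_bdd k hk).imp fun _ h _ => h
    · exact ⟨0, fun h => absurd h hk⟩
  choose C hC using hC
  refine ⟨fun t ht => ?_, fun t ht ω => ?_, fun t ht => ⟨∏ k ∈ Icc 1 t, (1 + C k), fun ω => ?_⟩⟩
  · rw [show B t = fun ω => ∏ k ∈ Icc 1 t, (1 + r k ω) from funext (hB t)]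
    refine Finset.measurable_prod _ fun k hk => measurable_const.add ?_
    exact (hr_meas k (hsub ht hk)).mono (hℱ (by grind)) le_rfl
  · rw [hB]
    exact one_le_prod fun k hk => by linarith [hr_nonneg k (hsub ht hk) ω]
  · rw [hB]
    refine prod_le_prod (fun k hk => ?_) fun k hk => ?_
    · linarith [hr_nonneg k (hsub ht hk) ω]
    · linarith [hC k (hsub ht hk) ω]

namespace IsAlloc

variable {Ω : Type*} [mΩ : MeasurableSpace Ω] {μ : Measure Ω} {T : ℕ}
  {ℱ : ℕ → MeasurableSpace Ω} {B : ℕ → Ω → ℝ} {W : Ω → ℝ} {u : ℕ → ℝ → ℝ} {X Y : ℕ → Ω → ℝ}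

lemma measurable_discounted (hY : IsAlloc μ T ℱ B W Y) (hB : IsDiscountProcess ℱ T B) {t : ℕ}
    (ht : t ∈ Icc 1 T) : Measurable[ℱ t] (fun ω => Y t ω / B t ω) :=
  (hY.1 t ht).1.div (hB.measurable t ht)

lemma exists_ae_abs_discounted_le (hY : IsAlloc μ T ℱ B W Y) (hB : IsDiscountProcess ℱ T B)
    {t : ℕ} (ht : t ∈ Icc 1 T) : ∃ C, ∀ᵐ ω ∂μ, |Y t ω / B t ω| ≤ C := by
  obtain ⟨C, hC⟩ := (hY.1 t ht).2
  refine ⟨C, hC.mono fun ω hω => ?_⟩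
  have hB1 := hB.one_le t ht ω
  rw [abs_div, abs_of_pos (show 0 < B t ω by linarith)]
  exact (div_le_self (abs_nonneg _) hB1).trans hω

lemma aestronglyMeasurable_discounted (hY : IsAlloc μ T ℱ B W Y) (hB : IsDiscountProcess ℱ T B)
    (hℱ : ∀ t, ℱ t ≤ mΩ) {t : ℕ} (ht : t ∈ Icc 1 T) :
    AEStronglyMeasurable (fun ω => Y t ω / B t ω) μ :=
  ((hY.measurable_discounted hB ht).mono (hℱ t) le_rfl).aestronglyMeasurable

lemma integrable_comp_discounted [IsFiniteMeasure μ] (hY : IsAlloc μ T ℱ B W Y)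
    (hB : IsDiscountProcess ℱ T B) (hℱ : ∀ t, ℱ t ≤ mΩ) {g : ℝ → ℝ} (hg : Continuous g) {t : ℕ}
    (ht : t ∈ Icc 1 T) : Integrable (fun ω => g (Y t ω / B t ω)) μ :=
  have ⟨_, hC⟩ := hY.exists_ae_abs_discounted_le hB ht
  integrable_comp_of_ae_abs_le hg (hY.aestronglyMeasurable_discounted hB hℱ ht) hC

lemma add_mul_mul (hX : IsAlloc μ T ℱ B W X) (hB : IsDiscountProcess ℱ T B) {H : ℕ → Ω → ℝ}
    (hHm : ∀ t ∈ Icc 1 T, Measurable[ℱ t] (H t)) (hHb : ∀ t ∈ Icc 1 T, ∃ C, ∀ᵐ ω ∂μ, |H t ω| ≤ C)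
    (hH : ∀ᵐ ω ∂μ, ∑ t ∈ Icc 1 T, H t ω = 0) (ε : ℝ) :
    IsAlloc μ T ℱ B W (fun t ω => X t ω + ε * B t ω * H t ω) := by
  refine ⟨fun t ht => ⟨(hX.1 t ht).1.add
    ((measurable_const.mul (hB.measurable t ht)).mul (hHm t ht)), ?_⟩, ?_⟩
  · obtain ⟨C, hC⟩ := (hX.1 t ht).2
    obtain ⟨K, hK⟩ := hB.le_const t ht
    obtain ⟨D, hD⟩ := hHb t ht
    refine ⟨C + |ε| * K * D, ?_⟩
    filter_upwards [hC, hD] with ω hXω hHω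
    have hB0 : 0 ≤ B t ω := zero_le_one.trans (hB.one_le t ht ω)
    calc |X t ω + ε * B t ω * H t ω| ≤ |X t ω| + |ε| * B t ω * |H t ω| :=
          (abs_add_le _ _).trans_eq (by rw [abs_mul, abs_mul, abs_of_nonneg hB0])
      _ ≤ C + |ε| * K * D := add_le_add hXω (mul_le_mul
          (mul_le_mul_of_nonneg_left (hK ω) (abs_nonneg ε)) hHω (abs_nonneg _)
          (mul_nonneg (abs_nonneg ε) (hB0.trans (hK ω))))
  · filter_upwards [hX.2, hH] with ω hXω hHω
    have hB0 : ∀ t ∈ Icc 1 T, B t ω ≠ 0 := fun t ht => by linarith [hB.one_le t ht ω]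
    rw [← hXω, ← add_zero (∑ t ∈ Icc 1 T, X t ω / B t ω), ← mul_zero ε, ← hHω, mul_sum,
      ← sum_add_distrib]
    exact sum_congr rfl fun t ht => by field_simp [hB0 t ht]

lemma hasDerivAt_allocVal_add_mul_mul [IsFiniteMeasure μ] (hX : IsAlloc μ T ℱ B W X)
    (hB : IsDiscountProcess ℱ T B) (hℱ : ∀ t, ℱ t ≤ mΩ)
    (hu : ∀ t ∈ Icc 1 T, ContDiff ℝ 1 (u t)) {H : ℕ → Ω → ℝ}
    (hHm : ∀ t ∈ Icc 1 T, AEStronglyMeasurable (H t) μ)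
    (hHb : ∀ t ∈ Icc 1 T, ∃ C, ∀ᵐ ω ∂μ, |H t ω| ≤ C) :
    HasDerivAt (fun ε => allocVal μ T u B (fun t ω => X t ω + ε * B t ω * H t ω))
      (∑ t ∈ Icc 1 T, ∫ ω, H t ω * deriv (u t) (X t ω / B t ω) ∂μ) 0 := by
  have hval : (fun ε => allocVal μ T u B (fun t ω => X t ω + ε * B t ω * H t ω)) =
      fun ε => ∑ t ∈ Icc 1 T, ∫ ω, u t (X t ω / B t ω + ε * H t ω) ∂μ := by
    funext ε
    refine sum_congr rfl fun t ht => integral_congr_ae (.of_forall fun ω => ?_)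
    have hB0 : B t ω ≠ 0 := by linarith [hB.one_le t ht ω]
    simp only
    congr 1
    field_simp
  rw [hval]
  refine HasDerivAt.fun_sum fun t ht => ?_
  obtain ⟨C, hC⟩ := hX.exists_ae_abs_discounted_le hB ht
  obtain ⟨D, hD⟩ := hHb t ht
  exact hasDerivAt_integral_comp_add_mul (hu t ht) (hX.aestronglyMeasurable_discounted hB hℱ ht)
    (hHm t ht) hC hD

lemma sum_integral_mul_deriv_eq_zero_of_optimal [IsFiniteMeasure μ] (hX : IsAlloc μ T ℱ B W X)
    (hB : IsDiscountProcess ℱ T B) (hℱ : ∀ t, ℱ t ≤ mΩ) (hu : ∀ t ∈ Icc 1 T, ContDiff ℝ 1 (u t))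
    (hopt : ∀ Y, IsAlloc μ T ℱ B W Y → allocVal μ T u B Y ≤ allocVal μ T u B X)
    {H : ℕ → Ω → ℝ} (hHm : ∀ t ∈ Icc 1 T, Measurable[ℱ t] (H t))
    (hHb : ∀ t ∈ Icc 1 T, ∃ C, ∀ᵐ ω ∂μ, |H t ω| ≤ C) (hH : ∀ᵐ ω ∂μ, ∑ t ∈ Icc 1 T, H t ω = 0) :
    ∑ t ∈ Icc 1 T, ∫ ω, H t ω * deriv (u t) (X t ω / B t ω) ∂μ = 0 := by
  refine IsLocalMax.hasDerivAt_eq_zero (.of_forall fun ε => ?_)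
    (hX.hasDerivAt_allocVal_add_mul_mul hB hℱ hu
      (fun t ht => ((hHm t ht).mono (hℱ t) le_rfl).aestronglyMeasurable) hHb)
  simpa using hopt _ (hX.add_mul_mul hB hHm hHb hH ε)

lemma setIntegral_deriv_eq_of_optimal [IsFiniteMeasure μ] (hX : IsAlloc μ T ℱ B W X)
    (hB : IsDiscountProcess ℱ T B) (hℱmono : Monotone ℱ) (hℱ : ∀ t, ℱ t ≤ mΩ)
    (hu : ∀ t ∈ Icc 1 T, ContDiff ℝ 1 (u t))
    (hopt : ∀ Y, IsAlloc μ T ℱ B W Y → allocVal μ T u B Y ≤ allocVal μ T u B X)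
    {s t : ℕ} (hs : s ∈ Icc 1 T) (ht : t ∈ Icc 1 T) (hst : s ≤ t) {A : Set Ω}
    (hA : MeasurableSet[ℱ s] A) :
    ∫ ω in A, deriv (u s) (X s ω / B s ω) ∂μ = ∫ ω in A, deriv (u t) (X t ω / B t ω) ∂μ := by
  -- move `ε 1_A` of discounted wealth from date `t` to date `s`
  set c : ℕ → ℝ := fun k => (if k = s then 1 else 0) - (if k = t then 1 else 0)
  have hc : ∑ k ∈ Icc 1 T, c k = 0 := by
    simp [c, sum_sub_distrib, sum_ite_eq', hs, ht]
  have hHm : ∀ k ∈ Icc 1 T, Measurable[ℱ k] (A.indicator fun _ => c k) := fun k _ => by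
    by_cases hk : c k = 0
    · simp [hk]
    · refine measurable_const.indicator (hℱmono ?_ A hA)
      by_contra! hks
      exact hk (by simp [c, hks.ne, (hks.trans_le hst).ne])
  have hsum := hX.sum_integral_mul_deriv_eq_zero_of_optimal hB hℱ hu hopt hHm
    (fun k _ => ⟨|c k|, .of_forall fun ω => by
      by_cases hω : ω ∈ A <;> simp [hω]⟩)
    (.of_forall fun ω => by
      by_cases hω : ω ∈ A
      · simpa only [Set.indicator_of_mem hω] using hc
      · simp only [Set.indicator_of_notMem hω, sum_const_zero])
  have hterm : ∀ k, ∫ ω, A.indicator (fun _ => c k) ω * deriv (u k) (X k ω / B k ω) ∂μ =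
      c k * ∫ ω in A, deriv (u k) (X k ω / B k ω) ∂μ := fun k => by
    rw [← integral_const_mul, ← integral_indicator (hℱ s A hA)]
    congr 1 with ω
    by_cases hω : ω ∈ A <;> simp [hω]
  simp only [hterm, c, sub_mul, sum_sub_distrib, ite_mul, one_mul, zero_mul, sum_ite_eq', hs, ht,
    if_true] at hsum
  linarith

lemma condExp_deriv_eq_of_optimal [IsFiniteMeasure μ] (hX : IsAlloc μ T ℱ B W X)
    (hB : IsDiscountProcess ℱ T B) (hℱmono : Monotone ℱ) (hℱ : ∀ t, ℱ t ≤ mΩ)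
    (hu : ∀ t ∈ Icc 1 T, ContDiff ℝ 1 (u t))
    (hopt : ∀ Y, IsAlloc μ T ℱ B W Y → allocVal μ T u B Y ≤ allocVal μ T u B X)
    {s t : ℕ} (hs : s ∈ Icc 1 T) (ht : t ∈ Icc 1 T) (hst : s ≤ t) :
    μ[(fun ω => deriv (u t) (X t ω / B t ω)) | ℱ s] =ᵐ[μ] fun ω => deriv (u s) (X s ω / B s ω) := by
  have hint : ∀ k ∈ Icc 1 T, Integrable (fun ω => deriv (u k) (X k ω / B k ω)) μ := fun k hk =>
    hX.integrable_comp_discounted hB hℱ ((hu k hk).continuous_deriv le_rfl) hk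
  refine (ae_eq_condExp_of_forall_setIntegral_eq (hℱ s) (hint t ht)
    (fun A _ _ => (hint s hs).integrableOn)
    (fun A hA _ => hX.setIntegral_deriv_eq_of_optimal hB hℱmono hℱ hu hopt hs ht hst hA)
    ?_).symm
  exact (((hu s hs).continuous_deriv le_rfl).measurable.comp
    (hX.measurable_discounted hB hs)).aestronglyMeasurable

lemma allocVal_le_add_sum_integral_mul_deriv [IsFiniteMeasure μ] (hX : IsAlloc μ T ℱ B W X)
    (hY : IsAlloc μ T ℱ B W Y) (hB : IsDiscountProcess ℱ T B) (hℱ : ∀ t, ℱ t ≤ mΩ)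
    (hu_conc : ∀ t ∈ Icc 1 T, ConcaveOn ℝ Set.univ (u t))
    (hu : ∀ t ∈ Icc 1 T, ContDiff ℝ 1 (u t)) :
    allocVal μ T u B Y ≤ allocVal μ T u B X + ∑ t ∈ Icc 1 T,
      ∫ ω, (Y t ω / B t ω - X t ω / B t ω) * deriv (u t) (X t ω / B t ω) ∂μ := by
  rw [← sub_le_iff_le_add', allocVal, allocVal, ← sum_sub_distrib]
  refine sum_le_sum fun t ht => ?_
  obtain ⟨C, hC⟩ := hX.exists_ae_abs_discounted_le hB ht
  obtain ⟨D, hD⟩ := hY.exists_ae_abs_discounted_le hB ht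
  exact integral_comp_sub_le_integral_mul_deriv (hu_conc t ht) (hu t ht)
    (hX.aestronglyMeasurable_discounted hB hℱ ht) (hY.aestronglyMeasurable_discounted hB hℱ ht)
    hC hD

lemma allocVal_le_of_condExp_deriv_eq [IsFiniteMeasure μ] (hX : IsAlloc μ T ℱ B W X)
    (hB : IsDiscountProcess ℱ T B) (hℱ : ∀ t, ℱ t ≤ mΩ) (hT : 1 ≤ T)
    (hu_conc : ∀ t ∈ Icc 1 T, ConcaveOn ℝ Set.univ (u t))
    (hu : ∀ t ∈ Icc 1 T, ContDiff ℝ 1 (u t))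
    (hmart : ∀ t ∈ Icc 1 T, μ[(fun ω => deriv (u T) (X T ω / B T ω)) | ℱ t]
      =ᵐ[μ] fun ω => deriv (u t) (X t ω / B t ω))
    (hY : IsAlloc μ T ℱ B W Y) : allocVal μ T u B Y ≤ allocVal μ T u B X := by
  have hTT : T ∈ Icc 1 T := mem_Icc.mpr ⟨hT, le_rfl⟩
  have hzero := sum_integral_mul_condExp_eq_zero hℱ
    (hX.integrable_comp_discounted hB hℱ ((hu T hTT).continuous_deriv le_rfl) hTT)
    (H := fun t ω => Y t ω / B t ω - X t ω / B t ω)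
    (fun t ht => ((hY.measurable_discounted hB ht).sub
      (hX.measurable_discounted hB ht)).stronglyMeasurable)
    (fun t ht => by
      obtain ⟨C, hC⟩ := hX.exists_ae_abs_discounted_le hB ht
      obtain ⟨D, hD⟩ := hY.exists_ae_abs_discounted_le hB ht
      exact ⟨D + C, by filter_upwards [hC, hD] with ω h₁ h₂
                       exact (abs_sub _ _).trans (add_le_add h₂ h₁)⟩)
    (by filter_upwards [hX.2, hY.2] with ω hXω hYω
        rw [sum_sub_distrib, hXω, hYω, sub_self])
  calc allocVal μ T u B Y ≤ allocVal μ T u B X + ∑ t ∈ Icc 1 T,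
        ∫ ω, (Y t ω / B t ω - X t ω / B t ω) * deriv (u t) (X t ω / B t ω) ∂μ :=
        hX.allocVal_le_add_sum_integral_mul_deriv hY hB hℱ hu_conc hu
    _ = allocVal μ T u B X + ∑ t ∈ Icc 1 T, ∫ ω, (Y t ω / B t ω - X t ω / B t ω) *
        μ[(fun ω => deriv (u T) (X T ω / B T ω)) | ℱ t] ω ∂μ := by
        congr 1
        refine sum_congr rfl fun t ht => integral_congr_ae ?_
        filter_upwards [hmart t ht] with ω hω
        rw [hω]
    _ = allocVal μ T u B X := by rw [hzero, add_zero]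

end IsAlloc

theorem optimal_iff_firstOrderCondition_general
    {Ω : Type*} [mΩ : MeasurableSpace Ω] (μ : Measure Ω) [IsProbabilityMeasure μ]
    (T : ℕ) (hT : 1 ≤ T)
    (ℱ : ℕ → MeasurableSpace Ω) (hℱmono : Monotone ℱ) (hℱle : ∀ t, ℱ t ≤ mΩ)
    (r : ℕ → Ω → ℝ)
    (hr_meas : ∀ t ∈ Finset.Icc 1 T, Measurable[ℱ (t - 1)] (r t))
    (hr_nonneg : ∀ t ∈ Finset.Icc 1 T, ∀ ω, 0 ≤ r t ω)
    (hr_bdd : ∀ t ∈ Finset.Icc 1 T, ∃ C : ℝ, ∀ ω, r t ω ≤ C)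
    (B : ℕ → Ω → ℝ) (hB : ∀ t ω, B t ω = ∏ k ∈ Finset.Icc 1 t, (1 + r k ω))
    (u : ℕ → ℝ → ℝ)
    (hu_conc : ∀ t ∈ Finset.Icc 1 T, StrictConcaveOn ℝ (Set.univ : Set ℝ) (u t))
    (hu_diff : ∀ t ∈ Finset.Icc 1 T, ContDiff ℝ 1 (u t))
    (W : Ω → ℝ)
    (X : ℕ → Ω → ℝ) (hX : IsAlloc μ T ℱ B W X) :
    (∀ Y, IsAlloc μ T ℱ B W Y → allocVal μ T u B Y ≤ allocVal μ T u B X) ↔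
    (∀ s ∈ Finset.Icc 1 T, ∀ t ∈ Finset.Icc 1 T, s ≤ t →
      μ[(fun ω => deriv (u t) (X t ω / B t ω)) | ℱ s]
        =ᵐ[μ] fun ω => deriv (u s) (X s ω / B s ω)) := by
  have hBd : IsDiscountProcess ℱ T B :=
    isDiscountProcess_prod_one_add hℱmono hr_meas hr_nonneg hr_bdd hB
  refine ⟨fun hopt s hs t ht hst =>
    hX.condExp_deriv_eq_of_optimal hBd hℱmono hℱle hu_diff hopt hs ht hst, fun hmart Y hY => ?_⟩
  exact hX.allocVal_le_of_condExp_deriv_eq hBd hℱle hT (fun t ht => (hu_conc t ht).concaveOn)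
    hu_diff (fun t ht => hmart t ht T (mem_Icc.mpr ⟨hT, le_rfl⟩) (mem_Icc.mp ht).2) hY

/-- Characterization of optimality by the first order condition (Theorem 2.8):
`(X_t) ∈ A(W)` is optimal iff `(u_t'(X̃_t))_{t∈𝕋}` is an `(F_t)`-martingale. -/
theorem optimal_iff_firstOrderCondition
    {Ω : Type*} [mΩ : MeasurableSpace Ω] (μ : Measure Ω) [IsProbabilityMeasure μ]
    (T : ℕ) (hT : 1 ≤ T)
    (ℱ : ℕ → MeasurableSpace Ω) (hℱmono : Monotone ℱ) (hℱle : ∀ t, ℱ t ≤ mΩ)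
    (r : ℕ → Ω → ℝ)
    (hr_meas : ∀ t ∈ Finset.Icc 1 T, Measurable[ℱ (t - 1)] (r t))
    (hr_nonneg : ∀ t ∈ Finset.Icc 1 T, ∀ ω, 0 ≤ r t ω)
    (hr_bdd : ∀ t ∈ Finset.Icc 1 T, ∃ C : ℝ, ∀ ω, r t ω ≤ C)
    (B : ℕ → Ω → ℝ) (hB : ∀ t ω, B t ω = ∏ k ∈ Finset.Icc 1 t, (1 + r k ω))
    (u : ℕ → ℝ → ℝ)
    (hu_conc : ∀ t ∈ Finset.Icc 1 T, StrictConcaveOn ℝ (Set.univ : Set ℝ) (u t))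
    (hu_diff : ∀ t ∈ Finset.Icc 1 T, ContDiff ℝ 1 (u t))
    (hu_deriv : ∀ t ∈ Finset.Icc 1 T, ∀ x : ℝ, 0 < deriv (u t) x)
    (W : Ω → ℝ) (hWmeas : Measurable[ℱ T] W) (hWbdd : ∃ C : ℝ, ∀ᵐ ω ∂μ, |W ω| ≤ C)
    (X : ℕ → Ω → ℝ) (hX : IsAlloc μ T ℱ B W X) :
    (∀ Y, IsAlloc μ T ℱ B W Y → allocVal μ T u B Y ≤ allocVal μ T u B X) ↔
    (∀ s ∈ Finset.Icc 1 T, ∀ t ∈ Finset.Icc 1 T, s ≤ t →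
      μ[(fun ω => deriv (u t) (X t ω / B t ω)) | ℱ s]
        =ᵐ[μ] fun ω => deriv (u s) (X s ω / B s ω)) :=
  optimal_iff_firstOrderCondition_general (mΩ := mΩ) μ T hT ℱ hℱmono hℱle r hr_meas hr_nonneg hr_bdd
    B hB u hu_conc hu_diff W X hX
end
end
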